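/- Let ω = (j₃ j₂ j₁) be a 3-cycle in S_n and σ ∈ S_n. If exactly two of the points j₁, j₂, j₃ lie in a common cycle of σ and the third lies in a different cycle, then ℓ(ωσ) = ℓ(σ). In particular, if j₁ and j₂ lie in one cycle of σ and j₃ lies in a different cycle, then in ωσ the points j₂ and j₃ lie in a common cycle and j₁ lies in a cycle of ωσ not containing j₂ and j₃. -/

import Mathlib

/-!
Left multiplication by a transposition `swap x y` merges the cycles of `x` and `y` when they are
different and splits their common cycle otherwise, changing the number of cycles by one. We
count cycles as the classes of `SameCycle`: the classes avoiding `x` and `y` are the same for `σ`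
and `swap x y * σ`, while `sign σ = (-1) ^ (n + ℓ(σ))` and the sign flips, so exactly one of the
two permutations has `x` and `y` in a common cycle. Writing `ω = swap j₃ j₂ * swap j₂ j₁`, in each
case of the theorem one of the two transpositions splits a cycle and the other merges two.
-/

open Equiv

/-- Number of disjoint cycles of a permutation of `Fin n`, counting each fixed
point as a cycle of length 1. -/
def cycleCount {n : ℕ} (σ : Perm (Fin n)) : ℕ :=
  σ.cycleType.card + (n - σ.support.card)

open Finset

namespace Equiv.Perm

section SameCycle

variable {α : Type*} {f g σ : Perm α} {a b x y : α}

theorem sameCycle_iff_of_eqOn (h : Set.EqOn g f {c | f.SameCycle a c}) :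
    g.SameCycle a b ↔ f.SameCycle a b := by
  have hpow : ∀ k : ℤ, (g ^ k) a = (f ^ k) a := by
    intro k
    induction k using Int.induction_on with
    | zero => rfl
    | succ k ih =>
      rw [add_comm, zpow_add, zpow_add, zpow_one, zpow_one, mul_apply, mul_apply, ih]
      exact h ⟨k, rfl⟩
    | pred k ih =>
      have hf : f.SameCycle a (f⁻¹ ((f ^ (-(k : ℤ))) a)) :=
        ⟨-1 + -k, by rw [zpow_add, zpow_neg_one, mul_apply]⟩
      rw [sub_eq_neg_add, zpow_add, zpow_add, zpow_neg_one, zpow_neg_one, mul_apply, mul_apply,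
        ih, inv_eq_iff_eq, h hf]
      exact (f.apply_symm_apply _).symm
  simp only [SameCycle, hpow]

theorem sameCycle_swap_mul_iff_of_not_sameCycle [DecidableEq α]
    (hx : ¬σ.SameCycle a x) (hy : ¬σ.SameCycle a y) :
    (swap x y * σ).SameCycle a b ↔ σ.SameCycle a b := by
  refine sameCycle_iff_of_eqOn fun c hc => ?_
  have hσc : σ.SameCycle a (σ c) := hc.trans (sameCycle_apply_right.2 .rfl)
  exact swap_apply_of_ne_of_ne (fun h => hx (h ▸ hσc)) fun h => hy (h ▸ hσc)

theorem sameCycle_swap_mul_or [DecidableEq α] (h : σ.SameCycle a x ∨ σ.SameCycle a y) :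
    (swap x y * σ).SameCycle a x ∨ (swap x y * σ).SameCycle a y := by
  by_contra! hτ
  have hσ := sameCycle_swap_mul_iff_of_not_sameCycle (σ := swap x y * σ) (b := x) hτ.1 hτ.2
  have hσ' := sameCycle_swap_mul_iff_of_not_sameCycle (σ := swap x y * σ) (b := y) hτ.1 hτ.2
  rw [swap_mul_self_mul] at hσ hσ'
  tauto

end SameCycle

section Classes

variable {α : Type*} [Fintype α] [DecidableEq α] {σ : Perm α} {a b x y : α}

def sameCycleClass (σ : Perm α) (a : α) : Finset α := {b | σ.SameCycle a b}

def sameCycleClasses (σ : Perm α) : Finset (Finset α) := univ.image σ.sameCycleClass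

@[simp]
theorem mem_sameCycleClass : b ∈ σ.sameCycleClass a ↔ σ.SameCycle a b := by
  simp [sameCycleClass]

theorem sameCycleClass_eq_iff : σ.sameCycleClass a = σ.sameCycleClass b ↔ σ.SameCycle a b := by
  refine ⟨fun h => mem_sameCycleClass.1 (h ▸ mem_sameCycleClass.2 .rfl), fun h => ?_⟩
  ext c
  simp only [mem_sameCycleClass]
  exact ⟨h.symm.trans, h.trans⟩

theorem sameCycleClass_of_mem_support (ha : a ∈ σ.support) :
    σ.sameCycleClass a = (σ.cycleOf a).support := by
  ext b
  rw [mem_sameCycleClass, mem_support_cycleOf_iff, and_iff_left ha]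

theorem sameCycleClass_of_apply_eq_self (ha : σ a = a) : σ.sameCycleClass a = {a} := by
  ext b
  simp only [mem_sameCycleClass, mem_singleton]
  exact ⟨fun h => (h.eq_of_left ha).symm, fun h => h ▸ .rfl⟩

theorem image_support_cycleOf (σ : Perm α) : σ.support.image σ.cycleOf = σ.cycleFactorsFinset := by
  ext c
  simp only [mem_image]
  refine ⟨fun ⟨a, ha, hc⟩ => hc ▸ cycleOf_mem_cycleFactorsFinset_iff.2 ha, fun hc => ?_⟩
  obtain ⟨a, ha⟩ := (mem_cycleFactorsFinset_iff.1 hc).1.nonempty_support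
  exact ⟨a, mem_cycleFactorsFinset_support_le hc ha, (cycle_is_cycleOf ha hc).symm⟩

theorem card_image_sameCycleClass_support (σ : Perm α) :
    #(σ.support.image σ.sameCycleClass) = Multiset.card σ.cycleType := by
  rw [image_congr (g := support ∘ σ.cycleOf) fun a ha => sameCycleClass_of_mem_support ha,
    ← image_image, image_support_cycleOf, card_image_of_injOn, cycleType_def, Multiset.card_map,
    card_val]
  intro c hc d hd hcd
  obtain ⟨a, ha⟩ := (mem_cycleFactorsFinset_iff.1 hc).1.nonempty_support
  rw [cycle_is_cycleOf ha hc, ← cycle_is_cycleOf (hcd ▸ ha : a ∈ d.support) hd]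

theorem card_image_sameCycleClass_compl_support (σ : Perm α) :
    #(σ.supportᶜ.image σ.sameCycleClass) = Fintype.card α - #σ.support := by
  rw [← card_compl, card_image_of_injOn]
  intro a ha b hb hab
  rw [sameCycleClass_of_apply_eq_self (notMem_support.1 (mem_compl.1 ha)),
    sameCycleClass_of_apply_eq_self (notMem_support.1 (mem_compl.1 hb))] at hab
  exact singleton_injective hab

theorem card_sameCycleClasses (σ : Perm α) :
    #σ.sameCycleClasses = Multiset.card σ.cycleType + (Fintype.card α - #σ.support) := by
  have hdisj : _root_.Disjoint (σ.support.image σ.sameCycleClass)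
      (σ.supportᶜ.image σ.sameCycleClass) := by
    simp only [disjoint_left, mem_image, mem_compl, not_exists, not_and]
    rintro _ ⟨a, ha, rfl⟩ b hb hba
    rw [sameCycleClass_of_apply_eq_self (notMem_support.1 hb)] at hba
    have hab : a = b := mem_singleton.1 (hba ▸ mem_sameCycleClass.2 .rfl)
    exact hb (hab ▸ ha)
  rw [sameCycleClasses, ← union_compl σ.support, image_union, card_union_of_disjoint hdisj,
    card_image_sameCycleClass_support, card_image_sameCycleClass_compl_support]

theorem sign_eq_neg_one_pow_card_sameCycleClasses (σ : Perm α) :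
    sign σ = (-1) ^ (Fintype.card α + #σ.sameCycleClasses) := by
  have hle : #σ.support ≤ Fintype.card α := card_le_univ _
  obtain ⟨m, hm⟩ := Nat.exists_eq_add_of_le hle
  rw [sign_of_cycleType, card_sameCycleClasses, sum_cycleType, hm, Nat.add_sub_cancel_left,
    show #σ.support + m + (Multiset.card σ.cycleType + m) =
      #σ.support + Multiset.card σ.cycleType + 2 * m by ring, pow_add _ _ (2 * m), pow_mul]
  simp

theorem sameCycleClass_swap_mul (hx : ¬σ.SameCycle a x) (hy : ¬σ.SameCycle a y) :
    (swap x y * σ).sameCycleClass a = σ.sameCycleClass a := by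
  ext b
  simp only [mem_sameCycleClass, sameCycle_swap_mul_iff_of_not_sameCycle hx hy]

theorem filter_sameCycleClasses_swap_mul :
    {C ∈ (swap x y * σ).sameCycleClasses | x ∉ C ∧ y ∉ C} =
      {C ∈ σ.sameCycleClasses | x ∉ C ∧ y ∉ C} := by
  suffices key : ∀ τ : Perm α, {C ∈ τ.sameCycleClasses | x ∉ C ∧ y ∉ C} ⊆
      {C ∈ (swap x y * τ).sameCycleClasses | x ∉ C ∧ y ∉ C} by
    refine (key σ).antisymm' ?_
    simpa only [swap_mul_self_mul] using key (swap x y * σ)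
  intro τ C hC
  simp only [sameCycleClasses, mem_filter, mem_image, mem_univ, true_and] at hC ⊢
  obtain ⟨⟨a, rfl⟩, hx, hy⟩ := hC
  exact ⟨⟨a, sameCycleClass_swap_mul (mt mem_sameCycleClass.2 hx) (mt mem_sameCycleClass.2 hy)⟩,
    hx, hy⟩

theorem card_sameCycleClasses_eq_card_filter_add (σ : Perm α) (x y : α) :
    #σ.sameCycleClasses =
      #{C ∈ σ.sameCycleClasses | x ∉ C ∧ y ∉ C} + if σ.SameCycle x y then 1 else 2 := by
  have hrest : {C ∈ σ.sameCycleClasses | ¬(x ∉ C ∧ y ∉ C)} =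
      {σ.sameCycleClass x, σ.sameCycleClass y} := by
    ext C
    simp only [sameCycleClasses, mem_filter, mem_image, mem_univ, true_and, mem_insert,
      mem_singleton, not_and_or, not_not]
    constructor
    · rintro ⟨⟨a, rfl⟩, hxa | hya⟩
      · exact .inl (sameCycleClass_eq_iff.2 (mem_sameCycleClass.1 hxa))
      · exact .inr (sameCycleClass_eq_iff.2 (mem_sameCycleClass.1 hya))
    · rintro (rfl | rfl)
      · exact ⟨⟨x, rfl⟩, .inl (mem_sameCycleClass.2 .rfl)⟩
      · exact ⟨⟨y, rfl⟩, .inr (mem_sameCycleClass.2 .rfl)⟩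
  rw [← card_filter_add_card_filter_not (fun C => x ∉ C ∧ y ∉ C), hrest]
  split_ifs with h
  · rw [sameCycleClass_eq_iff.2 h, insert_eq_of_mem (mem_singleton_self _), card_singleton]
  · rw [card_pair (mt sameCycleClass_eq_iff.1 h)]

theorem sameCycle_swap_mul_iff (hxy : x ≠ y) :
    (swap x y * σ).SameCycle x y ↔ ¬σ.SameCycle x y := by
  have hsign : sign (swap x y * σ) = -sign σ := by rw [sign_mul, sign_swap hxy, neg_one_mul]
  rw [sign_eq_neg_one_pow_card_sameCycleClasses, sign_eq_neg_one_pow_card_sameCycleClasses,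
    card_sameCycleClasses_eq_card_filter_add _ x y,
    card_sameCycleClasses_eq_card_filter_add σ x y, filter_sameCycleClasses_swap_mul] at hsign
  by_cases hσ : σ.SameCycle x y <;> by_cases hτ : (swap x y * σ).SameCycle x y <;>
    simp [hσ, hτ] at hsign ⊢

theorem card_sameCycleClasses_swap_mul_of_sameCycle (hxy : x ≠ y) (h : σ.SameCycle x y) :
    #(swap x y * σ).sameCycleClasses = #σ.sameCycleClasses + 1 := by
  have hτ : ¬(swap x y * σ).SameCycle x y := fun hτ => (sameCycle_swap_mul_iff hxy).1 hτ h
  rw [card_sameCycleClasses_eq_card_filter_add _ x y,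
    card_sameCycleClasses_eq_card_filter_add σ x y,
    filter_sameCycleClasses_swap_mul, if_neg hτ, if_pos h]

theorem card_sameCycleClasses_swap_mul_of_not_sameCycle (h : ¬σ.SameCycle x y) :
    #(swap x y * σ).sameCycleClasses + 1 = #σ.sameCycleClasses := by
  have hxy : x ≠ y := fun e => h (e ▸ .rfl)
  rw [card_sameCycleClasses_eq_card_filter_add _ x y,
    card_sameCycleClasses_eq_card_filter_add σ x y,
    filter_sameCycleClasses_swap_mul, if_pos ((sameCycle_swap_mul_iff hxy).2 h), if_neg h]

theorem sameCycle_swap_mul_of_not_sameCycle (h : ¬σ.SameCycle x y)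
    (ha : σ.SameCycle a x ∨ σ.SameCycle a y) : (swap x y * σ).SameCycle a x := by
  have hxy : x ≠ y := fun e => h (e ▸ .rfl)
  exact (sameCycle_swap_mul_or ha).elim id
    fun hay => hay.trans ((sameCycle_swap_mul_iff hxy).2 h).symm

end Classes

section ThreeCycle

variable {α : Type*} [Fintype α] [DecidableEq α] {σ : Perm α} {x y z : α}

theorem sameCycle_swap_mul_swap_mul_of_sameCycle (hxy : x ≠ y) (hyz : y ≠ z)
    (h : σ.SameCycle x y) (h' : ¬σ.SameCycle x z) :
    (swap z y * (swap y x * σ)).SameCycle y z ∧ ¬(swap z y * (swap y x * σ)).SameCycle x y ∧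
      ¬(swap z y * (swap y x * σ)).SameCycle x z := by
  set σ₁ := swap y x * σ
  have hzx : ¬σ.SameCycle z x := fun e => h' e.symm
  have hzy : ¬σ.SameCycle z y := fun e => h' (h.trans e.symm)
  have hz₁ : ¬σ₁.SameCycle z y := by rwa [sameCycle_swap_mul_iff_of_not_sameCycle hzy hzx]
  have hxz₁ : ¬σ₁.SameCycle x z := by
    rw [sameCycle_comm, sameCycle_swap_mul_iff_of_not_sameCycle hzy hzx]
    exact hzx
  have hxy₁ : ¬σ₁.SameCycle x y := fun e => (sameCycle_swap_mul_iff hxy.symm).1 e.symm h.symm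
  simp only [sameCycle_swap_mul_iff_of_not_sameCycle hxz₁ hxy₁]
  exact ⟨((sameCycle_swap_mul_iff hyz.symm).2 hz₁).symm, hxy₁, hxz₁⟩

theorem card_sameCycleClasses_swap_mul_swap_mul_of_sameCycle (hxy : x ≠ y)
    (h : σ.SameCycle x y) (h' : ¬σ.SameCycle x z) :
    #(swap z y * (swap y x * σ)).sameCycleClasses = #σ.sameCycleClasses := by
  have hzx : ¬σ.SameCycle z x := fun e => h' e.symm
  have hzy : ¬σ.SameCycle z y := fun e => h' (h.trans e.symm)
  have hsplit := card_sameCycleClasses_swap_mul_of_sameCycle hxy.symm h.symm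
  have hz₁ : ¬(swap y x * σ).SameCycle z y := by
    rwa [sameCycle_swap_mul_iff_of_not_sameCycle hzy hzx]
  have hmerge := card_sameCycleClasses_swap_mul_of_not_sameCycle hz₁
  omega

theorem card_sameCycleClasses_swap_mul_swap_mul_of_not_sameCycle (hyz : y ≠ z)
    (h : ¬σ.SameCycle x y) (h' : σ.SameCycle x z ∨ σ.SameCycle y z) :
    #(swap z y * (swap y x * σ)).sameCycleClasses = #σ.sameCycleClasses := by
  have hmerge := card_sameCycleClasses_swap_mul_of_not_sameCycle (mt SameCycle.symm h)
  have hz₁ : (swap y x * σ).SameCycle z y :=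
    sameCycle_swap_mul_of_not_sameCycle (mt SameCycle.symm h)
      (h'.symm.imp SameCycle.symm SameCycle.symm)
  have hsplit := card_sameCycleClasses_swap_mul_of_sameCycle hyz.symm hz₁
  omega

end ThreeCycle

end Equiv.Perm

theorem cycleCount_eq_card_sameCycleClasses {n : ℕ} (σ : Perm (Fin n)) :
    cycleCount σ = #σ.sameCycleClasses := by
  rw [Perm.card_sameCycleClasses, Fintype.card_fin]
  rfl

theorem threeCycle_mul_case_two_in_common_cycle_general
    (n : ℕ) (σ ω : Perm (Fin n)) (j₁ j₂ j₃ : Fin n)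
    (h12 : j₁ ≠ j₂) (h23 : j₂ ≠ j₃)
    (hω : ω = Equiv.swap j₃ j₂ * Equiv.swap j₂ j₁) :
    (((σ.SameCycle j₁ j₂ ∧ ¬ σ.SameCycle j₁ j₃) ∨
      (σ.SameCycle j₁ j₃ ∧ ¬ σ.SameCycle j₁ j₂) ∨
      (σ.SameCycle j₂ j₃ ∧ ¬ σ.SameCycle j₁ j₂)) →
        cycleCount (ω * σ) = cycleCount σ) ∧
    ((σ.SameCycle j₁ j₂ ∧ ¬ σ.SameCycle j₁ j₃) →
      ((ω * σ).SameCycle j₂ j₃ ∧ ¬ (ω * σ).SameCycle j₁ j₂ ∧ ¬ (ω * σ).SameCycle j₁ j₃)) := by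
  subst hω
  simp only [cycleCount_eq_card_sameCycleClasses, mul_assoc]
  refine ⟨?_, fun ⟨h, h'⟩ => Perm.sameCycle_swap_mul_swap_mul_of_sameCycle h12 h23 h h'⟩
  rintro (⟨h, h'⟩ | ⟨h, h'⟩ | ⟨h, h'⟩)
  · exact Perm.card_sameCycleClasses_swap_mul_swap_mul_of_sameCycle h12 h h'
  · exact Perm.card_sameCycleClasses_swap_mul_swap_mul_of_not_sameCycle h23 h' (.inl h)
  · exact Perm.card_sameCycleClasses_swap_mul_swap_mul_of_not_sameCycle h23 h' (.inr h)

/-- Let `ω = (j₃ j₂ j₁)` (sending `j₃ ↦ j₂ ↦ j₁ ↦ j₃`) be a 3-cycle. If exactly two of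
`j₁, j₂, j₃` lie in a common cycle of `σ` and the third lies in a different cycle, then
`ℓ(ωσ) = ℓ(σ)`. In particular, if `j₁` and `j₂` lie in one cycle of `σ` and `j₃` in a
different one, then in `ωσ` the points `j₂, j₃` share a cycle and `j₁` lies in a cycle
not containing `j₂` and `j₃`. -/
theorem threeCycle_mul_case_two_in_common_cycle
    (n : ℕ) (σ ω : Perm (Fin n)) (j₁ j₂ j₃ : Fin n)
    (h12 : j₁ ≠ j₂) (h13 : j₁ ≠ j₃) (h23 : j₂ ≠ j₃)
    (hω : ω = Equiv.swap j₃ j₂ * Equiv.swap j₂ j₁) :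
    (((σ.SameCycle j₁ j₂ ∧ ¬ σ.SameCycle j₁ j₃) ∨
      (σ.SameCycle j₁ j₃ ∧ ¬ σ.SameCycle j₁ j₂) ∨
      (σ.SameCycle j₂ j₃ ∧ ¬ σ.SameCycle j₁ j₂)) →
        cycleCount (ω * σ) = cycleCount σ) ∧
    ((σ.SameCycle j₁ j₂ ∧ ¬ σ.SameCycle j₁ j₃) →
      ((ω * σ).SameCycle j₂ j₃ ∧ ¬ (ω * σ).SameCycle j₁ j₂ ∧ ¬ (ω * σ).SameCycle j₁ j₃)) :=
  threeCycle_mul_case_two_in_common_cycle_general n σ ω j₁ j₂ j₃ h12 h23 hω
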